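/- arXiv:2005.08260 — 6 statements merged into one kernel-verified Lean document; each statement's English description precedes it below -/
import Mathlib

section
/- For n ≥ 2 players with d_N = Σdᵢ > 0 and δ > 0, the total cooperative emission is strictly less than the total Nash emission for every t ∈ [t₀, T): Σᵢuᵢ*(t) - Σᵢuᵢ^{NE}(t) = (d_N(n-1)/δ)(e^{δ(t-T)} - 1) < 0, with equality at t = T. -/
open Finset in
/-- For n ≥ 2 players, total cooperative emission minus total Nash emission equals
(d_N(n-1)/δ)(e^{δ(t-T)} - 1), which is < 0 on [t₀, T) and = 0 at t = T. -/
theorem stmt7 (n : ℕ) (hn : 2 ≤ n) (b d : Fin n → ℝ) (δ t₀ T : ℝ) (hδ : 0 < δ)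
    (dN : ℝ) (hdN : dN = ∑ i, d i) (hdNpos : 0 < dN)
    (uNE ustar : Fin n → ℝ → ℝ)
    (hNE : ∀ i t, uNE i t = b i - d i / δ + d i / δ * Real.exp (δ * (t - T)))
    (hst : ∀ i t, ustar i t = b i - dN / δ + dN / δ * Real.exp (δ * (t - T))) :
    (∀ t ∈ Set.Ico t₀ T,
      (∑ i, ustar i t) - (∑ i, uNE i t)
        = dN * (n - 1) / δ * (Real.exp (δ * (t - T)) - 1) ∧
      (∑ i, ustar i t) - (∑ i, uNE i t) < 0) ∧
    (∑ i, ustar i T) = (∑ i, uNE i T) := by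
  have key : ∀ t, (∑ i, ustar i t) - (∑ i, uNE i t)
      = dN * (n - 1) / δ * (Real.exp (δ * (t - T)) - 1) := by
    intro t
    simp only [hNE, hst, Finset.sum_add_distrib, Finset.sum_sub_distrib,
      ← Finset.sum_div, ← Finset.sum_mul, Finset.sum_const, Finset.card_univ,
      Fintype.card_fin, nsmul_eq_mul, ← hdN]
    field_simp
    ring
  constructor
  · intro t ht
    refine ⟨key t, ?_⟩
    rw [key t]
    have h1 : Real.exp (δ * (t - T)) - 1 < 0 := by
      have : δ * (t - T) < 0 := mul_neg_of_pos_of_neg hδ (by linarith [ht.2])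
      have := Real.exp_lt_one_iff.mpr this
      linarith
    have h2 : 0 < dN * (n - 1) / δ := by
      apply div_pos _ hδ
      apply mul_pos hdNpos
      have : (2:ℝ) ≤ n := by exact_mod_cast hn
      linarith
    exact mul_neg_of_pos_of_neg h2 h1
  · have := key T
    simp at this
    linarith [key T, this]
end

section
/- Let δ > 0, d > 0, b > 0. If T ≤ t₀ + b/d, then the control u(t) = b - d/δ + (d/δ)e^{δ(t-T)} is nonnegative for all t ∈ [t₀, T]. (In particular optimal controls have no switching points.) -/
/-- If T ≤ t₀ + b/d then u(t) = b - d/δ + (d/δ)e^{δ(t-T)} is nonnegative on [t₀, T]. -/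
theorem stmt8 (δ b d t₀ T : ℝ) (hδ : 0 < δ) (hb : 0 < b) (hd : 0 < d)
    (hT : T ≤ t₀ + b / d) :
    ∀ t ∈ Set.Icc t₀ T, 0 ≤ b - d / δ + d / δ * Real.exp (δ * (t - T)) := by
  intro t ht
  obtain ⟨h1, h2⟩ := ht
  have hexp : δ * (t - T) + 1 ≤ Real.exp (δ * (t - T)) := Real.add_one_le_exp _
  have hdδ : 0 < d / δ := div_pos hd hδ
  have key : d / δ * (δ * (t - T) + 1) ≤ d / δ * Real.exp (δ * (t - T)) :=
    mul_le_mul_of_nonneg_left hexp hdδ.le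
  have h3 : -(b/d) ≤ t - T := by linarith
  have h4 : -b ≤ d * (t - T) := by
    have := mul_le_mul_of_nonneg_left h3 hd.le
    rw [mul_neg, mul_div_cancel₀ _ hd.ne'] at this
    linarith
  have h5 : d / δ * (δ * (t - T) + 1) = d * (t - T) + d / δ := by
    field_simp
  nlinarith
end

section
/- For n ≥ 2, d_N > 0, δ > 0, and x^{NE}, x* the solutions of ẋ = Σuᵢ^{NE} - δx and ẋ = Σuᵢ* - δx respectively with the same initial condition x(t₀) = x₀, one has x*(t) < x^{NE}(t) for all t ∈ (t₀, T]. -/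
/-!
The difference of the two stocks solves `g' = S - δ g` with `g(t₀) = 0`, where the forcing
`S = Σ uᵢ^{NE} - Σ uᵢ* = (n - 1) (d_N / δ) (1 - e^{δ (t - T)})` is positive before `T`.
With the integrating factor, `(e^{δ t} g)' = e^{δ t} S > 0`, so `e^{δ t} g` increases strictly
from `0`.
-/

open Real Set Finset

theorem hasDerivAt_exp_mul_of_hasDerivAt_linear {g : ℝ → ℝ} {s δ t : ℝ}
    (hg : HasDerivAt g (s - δ * g t) t) :
    HasDerivAt (fun u => exp (δ * u) * g u) (exp (δ * t) * s) t := by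
  have hexp : HasDerivAt (fun u => exp (δ * u)) (exp (δ * t) * δ) t :=
    (hasDerivAt_exp (δ * t)).comp t ((hasDerivAt_id t).const_mul δ |>.congr_deriv (mul_one δ))
  exact (hexp.mul hg).congr_deriv (by ring)

theorem pos_of_hasDerivAt_linear_of_forcing_pos {g S : ℝ → ℝ} {δ a b : ℝ}
    (hg : ∀ t ∈ Icc a b, HasDerivAt g (S t - δ * g t) t) (hg0 : g a = 0)
    (hS : ∀ t ∈ Ioo a b, 0 < S t) :
    ∀ t ∈ Ioc a b, 0 < g t := by
  intro t ht
  have hweighted : ∀ u ∈ Icc a b,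
      HasDerivAt (fun u => exp (δ * u) * g u) (exp (δ * u) * S u) u :=
    fun u hu => hasDerivAt_exp_mul_of_hasDerivAt_linear (hg u hu)
  have hmono : StrictMonoOn (fun u => exp (δ * u) * g u) (Icc a b) := by
    refine strictMonoOn_of_deriv_pos (convex_Icc a b)
      (fun u hu => (hweighted u hu).continuousAt.continuousWithinAt) fun u hu => ?_
    rw [interior_Icc] at hu
    rw [(hweighted u (Ioo_subset_Icc_self hu)).deriv]
    exact mul_pos (exp_pos _) (hS u hu)
  have hlt := hmono (left_mem_Icc.2 (ht.1.le.trans ht.2)) (Ioc_subset_Icc_self ht) ht.1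
  simp only [hg0, mul_zero] at hlt
  exact pos_of_mul_pos_right hlt (exp_pos _).le

theorem lt_of_hasDerivAt_linear_of_forcing_lt {x y f h : ℝ → ℝ} {δ a b : ℝ}
    (hx : ∀ t ∈ Icc a b, HasDerivAt x (f t - δ * x t) t)
    (hy : ∀ t ∈ Icc a b, HasDerivAt y (h t - δ * y t) t) (hxy : x a = y a)
    (hfh : ∀ t ∈ Ioo a b, f t < h t) :
    ∀ t ∈ Ioc a b, x t < y t := by
  have hdiff : ∀ t ∈ Icc a b,
      HasDerivAt (fun u => y u - x u) ((h t - f t) - δ * (y t - x t)) t :=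
    fun t ht => ((hy t ht).sub (hx t ht)).congr_deriv (by ring)
  intro t ht
  exact sub_pos.1 <| pos_of_hasDerivAt_linear_of_forcing_pos hdiff (sub_eq_zero.2 hxy.symm)
    (fun u hu => sub_pos.2 (hfh u hu)) t ht

theorem sum_cooperative_lt_sum_nash {n : ℕ} (hn : 2 ≤ n) (b d : Fin n → ℝ) {δ e dN : ℝ}
    (hδ : 0 < δ) (hdN : dN = ∑ i, d i) (hdNpos : 0 < dN) (he : e < 1) :
    ∑ i, (b i - dN / δ + dN / δ * e) < ∑ i, (b i - d i / δ + d i / δ * e) := by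
  have hgap : ∑ i, (b i - d i / δ + d i / δ * e) - ∑ i, (b i - dN / δ + dN / δ * e)
      = ((n : ℝ) - 1) * (dN / δ) * (1 - e) := by
    simp only [sum_add_distrib, sum_sub_distrib, ← sum_div, ← sum_mul, sum_const, card_univ,
      Fintype.card_fin, nsmul_eq_mul, ← hdN]
    ring
  have hn1 : (0 : ℝ) < (n : ℝ) - 1 := by
    have : (2 : ℝ) ≤ n := by exact_mod_cast hn
    linarith
  have : 0 < ((n : ℝ) - 1) * (dN / δ) * (1 - e) :=
    mul_pos (mul_pos hn1 (div_pos hdNpos hδ)) (sub_pos.2 he)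
  linarith

open Finset in
/-- The cooperative pollution stock is strictly below the Nash stock on (t₀, T]. -/
theorem stmt10 (n : ℕ) (hn : 2 ≤ n) (b d : Fin n → ℝ) (δ t₀ T x₀ : ℝ) (hδ : 0 < δ)
    (dN : ℝ) (hdN : dN = ∑ i, d i) (hdNpos : 0 < dN)
    (xNE xstar : ℝ → ℝ)
    (hxNE : ∀ t ∈ Set.Icc t₀ T, HasDerivAt xNE
      ((∑ i, (b i - d i / δ + d i / δ * Real.exp (δ * (t - T)))) - δ * xNE t) t)
    (hxNE0 : xNE t₀ = x₀)
    (hxs : ∀ t ∈ Set.Icc t₀ T, HasDerivAt xstar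
      ((∑ i, (b i - dN / δ + dN / δ * Real.exp (δ * (t - T)))) - δ * xstar t) t)
    (hxs0 : xstar t₀ = x₀) :
    ∀ t ∈ Set.Ioc t₀ T, xstar t < xNE t := by
  refine lt_of_hasDerivAt_linear_of_forcing_lt hxs hxNE (hxs0.trans hxNE0.symm) fun t ht => ?_
  have hdecay : exp (δ * (t - T)) < 1 :=
    exp_lt_one_iff.2 (mul_neg_of_pos_of_neg hδ (sub_neg.2 ht.2))
  exact sum_cooperative_lt_sum_nash hn b d hδ hdN hdNpos hdecay
end

section
/- For d > 0, δ > 0, b > 0 with δ < d/b and t̄ = T + (1/δ)ln(1 - bδ/d) > t₀, the piecewise control u(t) = 0 for t₀ ≤ t ≤ t̄ and u(t) = b - d/δ + (d/δ)e^{δ(t-T)} for t̄ ≤ t ≤ T is continuous on [t₀, T] and takes values in [0, b]. -/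
/-!
Write `f(t) = b - d/δ + (d/δ) e^{δ(t-T)}` for the unconstrained Pontryagin control. It is
increasing, vanishes exactly at the switching time `t̄` (where `e^{δ(t̄-T)} = 1 - bδ/d`) and
equals `b` at `T`. Hence the piecewise control is `max 0 f`, which is continuous, and on
`t ≤ T` it lies between `0` and `f T = b`.
-/

open Real

lemma ite_le_eq_max_zero {α β : Type*} [LinearOrder α] [LinearOrder β] [Zero β]
    {f : α → β} {s : α} (hf : Monotone f) (hs : f s = 0) (t : α) :
    (if t ≤ s then 0 else f t) = max 0 (f t) := by
  split_ifs with h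
  · rw [max_eq_left (hs ▸ hf h)]
  · rw [max_eq_right (hs ▸ hf (not_le.mp h).le)]

noncomputable def pontryaginControl (b d δ T t : ℝ) : ℝ :=
  b - d / δ + d / δ * exp (δ * (t - T))

namespace pontryaginControl

variable {b d δ T : ℝ}

lemma continuous : Continuous (pontryaginControl b d δ T) := by
  unfold pontryaginControl
  fun_prop

lemma monotone (hδ : 0 ≤ δ) (hd : 0 ≤ d) : Monotone (pontryaginControl b d δ T) := by
  intro s t hst
  unfold pontryaginControl
  gcongr

lemma apply_terminal : pontryaginControl b d δ T T = b := by
  simp [pontryaginControl]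

lemma apply_switchingTime (hδ : δ ≠ 0) (hd : d ≠ 0) (hc : 0 < 1 - b * δ / d) :
    pontryaginControl b d δ T (T + (1 / δ) * log (1 - b * δ / d)) = 0 := by
  have hexp : exp (δ * (T + (1 / δ) * log (1 - b * δ / d) - T)) = 1 - b * δ / d := by
    rw [add_sub_cancel_left, ← mul_assoc, mul_one_div_cancel hδ, one_mul, exp_log hc]
  rw [pontryaginControl, hexp]
  field_simp
  ring

end pontryaginControl

theorem stmt13_general (δ b d t₀ T : ℝ) (hδ : 0 < δ) (hb : 0 < b) (hd : 0 < d)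
    (hlt : δ < d / b)
    (u : ℝ → ℝ)
    (hu : ∀ t : ℝ, u t =
      if t ≤ T + (1 / δ) * Real.log (1 - b * δ / d) then 0
      else b - d / δ + d / δ * Real.exp (δ * (t - T))) :
    ContinuousOn u (Set.Icc t₀ T) ∧ ∀ t ∈ Set.Icc t₀ T, u t ∈ Set.Icc 0 b := by
  have hc : 0 < 1 - b * δ / d := by
    rw [lt_div_iff₀ hb] at hlt
    rw [sub_pos, div_lt_one hd]
    linarith
  have hmono := pontryaginControl.monotone (b := b) (T := T) hδ.le hd.le
  have hu_max : u = fun t ↦ max 0 (pontryaginControl b d δ T t) := funext fun t ↦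
    (hu t).trans <| ite_le_eq_max_zero hmono
      (pontryaginControl.apply_switchingTime hδ.ne' hd.ne' hc) t
  subst hu_max
  refine ⟨(continuous_const.max pontryaginControl.continuous).continuousOn, fun t ht ↦ ?_⟩
  refine ⟨le_max_left _ _, max_le hb.le ?_⟩
  calc pontryaginControl b d δ T t ≤ pontryaginControl b d δ T T := hmono ht.2
    _ = b := pontryaginControl.apply_terminal

/-- The piecewise optimal control (0 before the switching time t̄, Pontryagin after)
is continuous on [t₀, T] and takes values in [0, b]. -/
theorem stmt13 (δ b d t₀ T : ℝ) (hδ : 0 < δ) (hb : 0 < b) (hd : 0 < d)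
    (hlt : δ < d / b)
    (ht : t₀ < T + (1 / δ) * Real.log (1 - b * δ / d))
    (u : ℝ → ℝ)
    (hu : ∀ t : ℝ, u t =
      if t ≤ T + (1 / δ) * Real.log (1 - b * δ / d) then 0
      else b - d / δ + d / δ * Real.exp (δ * (t - T))) :
    ContinuousOn u (Set.Icc t₀ T) ∧ ∀ t ∈ Set.Icc t₀ T, u t ∈ Set.Icc 0 b :=
  stmt13_general δ b d t₀ T hδ hb hd hlt u hu
end

section
/- Let n ≥ 2, dᵢ > 0 for all i, δ > 0, and suppose all controls are admissible (δ ≥ d_N/bᵢ for all i). Then the total cooperative payoff strictly exceeds the total Nash payoff: Σᵢ Kᵢ(x₀, u*) > Σᵢ Kᵢ(x₀, u^{NE}), where Kᵢ(x₀,u) = ∫_{t₀}^T [uᵢ(bᵢ - uᵢ/2) - dᵢ x(t)] dt and x solves ẋ = Σuⱼ - δx, x(t₀)=x₀. -/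
/-!
With the costate `ψ(t) = (d_N/δ)(1 - e^{δ(t-T)})`, which solves `ψ' = δψ - d_N`, `ψ(T) = 0`,
integration by parts along any trajectory gives `∫ d_N x = ψ(t₀) x₀ + ∫ ψ Σⱼ uⱼ`. Hence the
total payoff is `∫ Σᵢ (uᵢ(bᵢ - uᵢ/2) - ψ uᵢ) - ψ(t₀) x₀`, whose integrand is a concave quadratic
in each `uᵢ`, maximal exactly at `u*ᵢ = bᵢ - ψ`. The loss of the Nash profile is therefore
`∫ Σᵢ (u*ᵢ - u^{NE}ᵢ)² / 2`, and `u*ᵢ - u^{NE}ᵢ = -((d_N - dᵢ)/δ)(1 - e^{δ(t-T)}) ≠ 0` for `t < T`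
because `d_N > dᵢ` when there are at least two players.
-/

open Finset

theorem integral_const_mul_eq_of_hasDerivAt_adjoint {δ c a b : ℝ} {x S ψ : ℝ → ℝ}
    (hS : Continuous S) (hx : ∀ t, HasDerivAt x (S t - δ * x t) t)
    (hψ : ∀ t, HasDerivAt ψ (δ * ψ t - c) t) :
    ∫ t in a..b, c * x t = ψ a * x a - ψ b * x b + ∫ t in a..b, ψ t * S t := by
  have hxc : Continuous x := continuous_iff_continuousAt.mpr fun t => (hx t).continuousAt
  have hψc : Continuous ψ := continuous_iff_continuousAt.mpr fun t => (hψ t).continuousAt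
  have hprod : ∀ t, HasDerivAt (ψ * x) (ψ t * S t - c * x t) t := fun t =>
    ((hψ t).mul (hx t)).congr_deriv (by ring)
  have hftc := intervalIntegral.integral_eq_sub_of_hasDerivAt (a := a) (b := b)
    (fun t _ => hprod t)
    ((by fun_prop : Continuous fun t => ψ t * S t - c * x t).intervalIntegrable _ _)
  rw [intervalIntegral.integral_sub
    ((by fun_prop : Continuous fun t => ψ t * S t).intervalIntegrable _ _)
    ((by fun_prop : Continuous fun t => c * x t).intervalIntegrable _ _), Pi.mul_apply,
    Pi.mul_apply] at hftc
  linarith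

noncomputable def costate (δ c T t : ℝ) : ℝ := c / δ * (1 - Real.exp (δ * (t - T)))

section Costate

variable {δ c T : ℝ}

theorem hasDerivAt_costate (hδ : δ ≠ 0) (t : ℝ) :
    HasDerivAt (costate δ c T) (δ * costate δ c T t - c) t := by
  have hexp : HasDerivAt (fun s => Real.exp (δ * (s - T))) (Real.exp (δ * (t - T)) * δ) t := by
    simpa using (((hasDerivAt_id t).sub_const T).const_mul δ).exp
  refine ((hexp.const_sub 1).const_mul (c / δ)).congr_deriv ?_
  unfold costate
  field_simp
  ring

@[fun_prop]
theorem continuous_costate : Continuous (costate δ c T) := by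
  unfold costate
  fun_prop

theorem costate_self : costate δ c T T = 0 := by
  simp [costate]

theorem costate_sub (c' t : ℝ) :
    costate δ c T t - costate δ c' T t = costate δ (c - c') T t := by
  unfold costate
  ring

theorem costate_pos (hδ : 0 < δ) (hc : 0 < c) {t : ℝ} (ht : t < T) : 0 < costate δ c T t := by
  have : Real.exp (δ * (t - T)) < 1 := Real.exp_lt_one_iff.mpr (by nlinarith)
  exact mul_pos (div_pos hc hδ) (by linarith)

end Costate

theorem sum_integral_payoff_eq {n : ℕ} (β d : Fin n → ℝ) {δ a b : ℝ} {ψ x : ℝ → ℝ}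
    {u : Fin n → ℝ → ℝ} (hu : ∀ i, Continuous (u i))
    (hx : ∀ t, HasDerivAt x ((∑ j, u j t) - δ * x t) t)
    (hψ : ∀ t, HasDerivAt ψ (δ * ψ t - ∑ i, d i) t) :
    ∑ i, ∫ t in a..b, (u i t * (β i - u i t / 2) - d i * x t)
      = (∫ t in a..b, ∑ i, (u i t * (β i - u i t / 2) - ψ t * u i t))
        - ψ a * x a + ψ b * x b := by
  have hxc : Continuous x := continuous_iff_continuousAt.mpr fun t => (hx t).continuousAt
  have hψc : Continuous ψ := continuous_iff_continuousAt.mpr fun t => (hψ t).continuousAt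
  have hf : Continuous fun t => ∑ i, u i t * (β i - u i t / 2) :=
    continuous_finsetSum _ fun i _ => by have := hu i; fun_prop
  have hS : Continuous fun t => ∑ j, u j t := continuous_finsetSum _ fun j _ => hu j
  calc ∑ i, ∫ t in a..b, (u i t * (β i - u i t / 2) - d i * x t)
      = ∫ t in a..b, ((∑ i, u i t * (β i - u i t / 2)) - (∑ i, d i) * x t) := by
        rw [← intervalIntegral.integral_finsetSum fun i _ =>
          (by have := hu i; fun_prop : Continuous _).intervalIntegrable _ _]
        simp only [sum_sub_distrib, sum_mul]
    _ = (∫ t in a..b, ∑ i, u i t * (β i - u i t / 2))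
          - (ψ a * x a - ψ b * x b + ∫ t in a..b, ψ t * ∑ j, u j t) := by
        rw [intervalIntegral.integral_sub (hf.intervalIntegrable _ _)
          ((by fun_prop : Continuous fun t => (∑ i, d i) * x t).intervalIntegrable _ _),
          integral_const_mul_eq_of_hasDerivAt_adjoint hS hx hψ]
    _ = (∫ t in a..b, ∑ i, (u i t * (β i - u i t / 2) - ψ t * u i t))
          - ψ a * x a + ψ b * x b := by
        simp only [sum_sub_distrib, ← mul_sum]
        rw [intervalIntegral.integral_sub (hf.intervalIntegrable _ _)
          ((by fun_prop : Continuous fun t => ψ t * ∑ j, u j t).intervalIntegrable _ _)]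
        ring

theorem payoff_sub_payoff_of_maximizer (β ψ v : ℝ) :
    (β - ψ) * (β - (β - ψ) / 2) - ψ * (β - ψ) - (v * (β - v / 2) - ψ * v)
      = (β - ψ - v) ^ 2 / 2 := by
  ring

open Finset in
theorem stmt16_general (n : ℕ) (hn : 2 ≤ n) (b d : Fin n → ℝ) (δ t₀ T x₀ : ℝ)
    (hδ : 0 < δ) (ht : t₀ < T) (hd : ∀ i, 0 < d i)
    (dN : ℝ) (hdN : dN = ∑ i, d i)
    (uNE ustar : Fin n → ℝ → ℝ)
    (hNE : ∀ i t, uNE i t = b i - d i / δ + d i / δ * Real.exp (δ * (t - T)))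
    (hst : ∀ i t, ustar i t = b i - dN / δ + dN / δ * Real.exp (δ * (t - T)))
    (xNE xstar : ℝ → ℝ)
    (hxNE : ∀ t : ℝ, HasDerivAt xNE ((∑ j, uNE j t) - δ * xNE t) t)
    (hxNE0 : xNE t₀ = x₀)
    (hxs : ∀ t : ℝ, HasDerivAt xstar ((∑ j, ustar j t) - δ * xstar t) t)
    (hxs0 : xstar t₀ = x₀) :
    (∑ i, ∫ t in t₀..T, (uNE i t * (b i - uNE i t / 2) - d i * xNE t))
      < ∑ i, ∫ t in t₀..T, (ustar i t * (b i - ustar i t / 2) - d i * xstar t) := by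
  set ψ := costate δ dN T
  have hψ : ∀ t, HasDerivAt ψ (δ * ψ t - ∑ i, d i) t := hdN ▸ hasDerivAt_costate hδ.ne'
  obtain rfl : uNE = fun i t => b i - costate δ (d i) T t := by
    funext i t; rw [hNE]; unfold costate; ring
  obtain rfl : ustar = fun i t => b i - ψ t := by
    funext i t; rw [hst]; unfold ψ costate; ring
  rw [sum_integral_payoff_eq b d (fun i => by fun_prop) hxNE hψ,
    sum_integral_payoff_eq b d (u := fun i t => b i - ψ t) (fun i => by fun_prop) hxs hψ,
    show ψ T = 0 from costate_self, hxNE0, hxs0]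
  simp only [zero_mul, add_zero, sub_lt_sub_iff_right]
  rw [← sub_pos, ← intervalIntegral.integral_sub
    ((by fun_prop : Continuous _).intervalIntegrable _ _)
    ((by fun_prop : Continuous _).intervalIntegrable _ _)]
  simp only [← sum_sub_distrib, payoff_sub_payoff_of_maximizer]
  have : Nontrivial (Fin n) := Fin.nontrivial_iff_two_le.mpr hn
  obtain ⟨i, j, hij⟩ := exists_pair_ne (Fin n)
  have hdi : d i < dN := hdN ▸ single_lt_sum hij.symm (mem_univ i) (mem_univ j) (hd j)
    fun k _ _ => (hd k).le
  refine intervalIntegral.intervalIntegral_pos_of_pos_on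
    ((by fun_prop : Continuous _).intervalIntegrable _ _) (fun t htT => ?_) ht
  refine sum_pos' (fun k _ => by positivity) ⟨i, mem_univ i, ?_⟩
  have hgap : 0 < ψ t - costate δ (d i) T t := by
    rw [costate_sub]
    exact costate_pos hδ (sub_pos.mpr hdi) htT.2
  nlinarith

open Finset in
/-- For n ≥ 2 players with all dᵢ > 0 and admissible controls (δ ≥ d_N/bᵢ),
the total cooperative payoff strictly exceeds the total Nash payoff. -/
theorem stmt16 (n : ℕ) (hn : 2 ≤ n) (b d : Fin n → ℝ) (δ t₀ T x₀ : ℝ)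
    (hδ : 0 < δ) (ht : t₀ < T) (hb : ∀ i, 0 < b i) (hd : ∀ i, 0 < d i)
    (dN : ℝ) (hdN : dN = ∑ i, d i)
    (hadm : ∀ i, dN / b i ≤ δ)
    (uNE ustar : Fin n → ℝ → ℝ)
    (hNE : ∀ i t, uNE i t = b i - d i / δ + d i / δ * Real.exp (δ * (t - T)))
    (hst : ∀ i t, ustar i t = b i - dN / δ + dN / δ * Real.exp (δ * (t - T)))
    (xNE xstar : ℝ → ℝ)
    (hxNE : ∀ t : ℝ, HasDerivAt xNE ((∑ j, uNE j t) - δ * xNE t) t)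
    (hxNE0 : xNE t₀ = x₀)
    (hxs : ∀ t : ℝ, HasDerivAt xstar ((∑ j, ustar j t) - δ * xstar t) t)
    (hxs0 : xstar t₀ = x₀) :
    (∑ i, ∫ t in t₀..T, (uNE i t * (b i - uNE i t / 2) - d i * xNE t))
      < ∑ i, ∫ t in t₀..T, (ustar i t * (b i - ustar i t / 2) - d i * xstar t) :=
  stmt16_general n hn b d δ t₀ T x₀ hδ ht hd dN hdN uNE ustar hNE hst xNE xstar hxNE hxNE0 hxs hxs0
end

section
/- Let δ > 0, d_N = Σdᵢ with n ≥ 2 and all dᵢ > 0. If dᵢ/bᵢ ≤ δ < d_N/bᵢ, then player i's unconstrained cooperative control uᵢ*(t) = bᵢ - d_N/δ + (d_N/δ)e^{δ(t-T)} is negative for t < T + (1/δ)ln(1 - bᵢδ/d_N), while their Nash control uᵢ^{NE}(t) = bᵢ - dᵢ/δ + (dᵢ/δ)e^{δ(t-T)} is nonnegative on all of (-∞, T]. -/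
open Finset in
/-- If dᵢ/bᵢ ≤ δ < d_N/bᵢ, then player i's unconstrained cooperative control is
negative before T + (1/δ)ln(1 - bᵢδ/d_N), while their Nash control is nonnegative on
(-∞, T]. -/
theorem stmt18 (n : ℕ) (hn : 2 ≤ n) (b d : Fin n → ℝ) (δ T : ℝ) (hδ : 0 < δ)
    (hd : ∀ j, 0 < d j) (i : Fin n) (hbi : 0 < b i)
    (dN : ℝ) (hdN : dN = ∑ j, d j)
    (h1 : d i / b i ≤ δ) (h2 : δ < dN / b i) :
    (∀ t : ℝ, t < T + (1 / δ) * Real.log (1 - b i * δ / dN) →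
      b i - dN / δ + dN / δ * Real.exp (δ * (t - T)) < 0) ∧
    (∀ t : ℝ, t ≤ T →
      0 ≤ b i - d i / δ + d i / δ * Real.exp (δ * (t - T))) := by
  have hdN0 : 0 < dN := by
    rw [hdN]; exact Finset.sum_pos (fun j _ => hd j) ⟨i, Finset.mem_univ i⟩
  have hbd : b i * δ < dN := by
    have := (lt_div_iff₀ hbi).mp h2
    linarith
  constructor
  · intro t ht
    have harg : 0 < 1 - b i * δ / dN := by
      rw [sub_pos, div_lt_one hdN0]; exact hbd
    have hlt : δ * (t - T) < Real.log (1 - b i * δ / dN) := by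
      have : t - T < (1 / δ) * Real.log (1 - b i * δ / dN) := by linarith
      calc δ * (t - T) < δ * ((1 / δ) * Real.log (1 - b i * δ / dN)) := by
            exact mul_lt_mul_of_pos_left this hδ
        _ = Real.log (1 - b i * δ / dN) := by field_simp
    have hexp : Real.exp (δ * (t - T)) < 1 - b i * δ / dN := by
      calc Real.exp (δ * (t - T)) < Real.exp (Real.log (1 - b i * δ / dN)) :=
            Real.exp_lt_exp.mpr hlt
        _ = 1 - b i * δ / dN := Real.exp_log harg
    have hdNδ : 0 < dN / δ := by positivity
    have : dN / δ * Real.exp (δ * (t - T)) < dN / δ * (1 - b i * δ / dN) :=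
      mul_lt_mul_of_pos_left hexp hdNδ
    have heq : dN / δ * (1 - b i * δ / dN) = dN / δ - b i := by
      field_simp
    linarith
  · intro t _
    have h1' : d i ≤ δ * b i := (div_le_iff₀ hbi).mp h1
    have : d i / δ ≤ b i := by rw [div_le_iff₀ hδ]; linarith
    have hpos : 0 < d i / δ * Real.exp (δ * (t - T)) := mul_pos (div_pos (hd i) hδ) (Real.exp_pos _)
    linarith
end
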